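/- arXiv:2210.10760 — 4 statements merged into one kernel-verified Lean document; each statement's English description precedes it below -/
import Mathlib

section
/- Let X and Z be independent real-valued random variables on a probability space, with X Gaussian with mean μ_X and variance σ² > 0 and Z Gaussian with mean μ_Z and variance τ² > 0. Then the conditional expectation of X given the σ-algebra generated by X + Z satisfies, almost surely, E[X | X + Z] = μ_X + (X + Z − μ_X − μ_Z) · σ²/(σ² + τ²). -/
/-!
`(X, X + Z)` is jointly Gaussian, so with `c = Cov(X, X + Z) / Var(X + Z) = σ² / (σ² + τ²)` the
residual `X - c (X + Z)` is uncorrelated with `X + Z`, hence independent of it. Conditioning on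
`X + Z` then replaces the residual by its mean `μX - c (μX + μZ)` and leaves `c (X + Z)` unchanged.
-/

open MeasureTheory ProbabilityTheory
open scoped NNReal

namespace ProbabilityTheory

variable {Ω β : Type*} {mΩ : MeasurableSpace Ω} {mβ : MeasurableSpace β} {μ : Measure Ω}

lemma condExp_comap_ae_eq_of_indepFun_sub [IsFiniteMeasure μ] {X : Ω → ℝ} {S : Ω → β}
    {g : β → ℝ} (hX : Measurable X) (hXi : Integrable X μ) (hS : Measurable S)
    (hg : Measurable g) (hgS : Integrable (fun ω ↦ g (S ω)) μ)
    (hindep : IndepFun (fun ω ↦ X ω - g (S ω)) S μ) :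
    μ[X | mβ.comap S] =ᵐ[μ] fun ω ↦ μ[fun ω ↦ X ω - g (S ω)] + g (S ω) := by
  set R := fun ω ↦ X ω - g (S ω)
  have hR : Measurable R := hX.sub (hg.comp hS)
  have hsplit : X = R + fun ω ↦ g (S ω) := by ext ω; simp [R]
  have hgS_meas : StronglyMeasurable[mβ.comap S] fun ω ↦ g (S ω) :=
    (hg.comp (comap_measurable S)).stronglyMeasurable
  have hR_cond : μ[R | mβ.comap S] =ᵐ[μ] fun _ ↦ μ[R] :=
    condExp_indep_eq hR.comap_le hS.comap_le (comap_measurable R).stronglyMeasurable hindep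
  calc μ[X | mβ.comap S] =ᵐ[μ] μ[R | mβ.comap S] + μ[fun ω ↦ g (S ω) | mβ.comap S] := by
        rw [hsplit]; exact condExp_add (hXi.sub hgS) hgS _
    _ =ᵐ[μ] _ := by
        rw [condExp_of_stronglyMeasurable hS.comap_le hgS_meas hgS]
        filter_upwards [hR_cond] with ω hω
        simp [hω]

lemma covariance_eq_zero_of_variance_eq_zero [IsFiniteMeasure μ] {X S : Ω → ℝ}
    (hS : MemLp S 2 μ) (hS0 : Var[S; μ] = 0) : cov[X, S; μ] = 0 := by
  have hconst : S =ᵐ[μ] fun _ ↦ μ[S] := by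
    rw [← evariance_eq_zero_iff hS.aemeasurable, ← ofReal_variance hS, hS0, ENNReal.ofReal_zero]
  refine integral_eq_zero_of_ae ?_
  filter_upwards [hconst] with ω hω
  simp [hω]

lemma IndepFun.covariance_fun_add_right_eq_variance [IsFiniteMeasure μ] {X Z : Ω → ℝ}
    (h : X ⟂ᵢ[μ] Z) (hX : MemLp X 2 μ) (hZ : MemLp Z 2 μ) :
    cov[X, fun ω ↦ X ω + Z ω; μ] = Var[X; μ] := by
  rw [← Pi.add_def, covariance_add_right hX hX hZ, covariance_self hX.aemeasurable,
    h.covariance_eq_zero hX hZ, add_zero]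

lemma IndepFun.hasGaussianLaw_prodMk_add {X Z : Ω → ℝ} (hX : HasGaussianLaw X μ)
    (hZ : HasGaussianLaw Z μ) (h : X ⟂ᵢ[μ] Z) :
    HasGaussianLaw (fun ω ↦ (X ω, X ω + Z ω)) μ :=
  (h.hasGaussianLaw hX hZ).map_fun
    ((ContinuousLinearMap.fst ℝ ℝ ℝ).prod
      (ContinuousLinearMap.fst ℝ ℝ ℝ + ContinuousLinearMap.snd ℝ ℝ ℝ))

lemma HasGaussianLaw.indepFun_sub_const_mul {X S : Ω → ℝ}
    (h : HasGaussianLaw (fun ω ↦ (X ω, S ω)) μ) {c : ℝ} (hc : cov[X, S; μ] = c * Var[S; μ]) :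
    IndepFun (fun ω ↦ X ω - c * S ω) S μ := by
  have := h.isProbabilityMeasure
  let L : ℝ × ℝ →L[ℝ] ℝ × ℝ :=
    (ContinuousLinearMap.fst ℝ ℝ ℝ - c • ContinuousLinearMap.snd ℝ ℝ ℝ).prod
      (ContinuousLinearMap.snd ℝ ℝ ℝ)
  have hL : HasGaussianLaw (fun ω ↦ (X ω - c * S ω, S ω)) μ := h.map_fun L
  refine hL.indepFun_of_covariance_eq_zero ?_
  have hX2 := h.fst.memLp_two
  have hS2 := h.snd.memLp_two
  rw [covariance_fun_sub_left hX2 (hS2.const_mul c) hS2, covariance_const_mul_left,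
    covariance_self hS2.aemeasurable, hc, sub_self]

lemma HasGaussianLaw.condExp_comap_snd_ae_eq {X S : Ω → ℝ}
    (h : HasGaussianLaw (fun ω ↦ (X ω, S ω)) μ) (hX : Measurable X) (hS : Measurable S) :
    μ[X | MeasurableSpace.comap S inferInstance] =ᵐ[μ]
      fun ω ↦ μ[X] + (S ω - μ[S]) * (cov[X, S; μ] / Var[S; μ]) := by
  have := h.isProbabilityMeasure
  set c := cov[X, S; μ] / Var[S; μ]
  -- If `Var[S] = 0`, the junk value `c = 0` is still the right slope since `S` is a.s. constant.
  have hc : cov[X, S; μ] = c * Var[S; μ] := by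
    by_cases hS0 : Var[S; μ] = 0
    · simp [hS0, covariance_eq_zero_of_variance_eq_zero h.snd.memLp_two hS0]
    · exact (div_mul_cancel₀ _ hS0).symm
  have hXi := h.fst.integrable
  have hSi := h.snd.integrable
  filter_upwards [condExp_comap_ae_eq_of_indepFun_sub hX hXi hS (measurable_const_mul c)
    (hSi.const_mul c) (h.indepFun_sub_const_mul hc)] with ω hω
  rw [hω, integral_sub hXi (hSi.const_mul c), integral_const_mul]
  ring

end ProbabilityTheory

theorem condexp_add_indep_gaussian_general
    {Ω : Type*} {mΩ : MeasurableSpace Ω} {μ : Measure Ω} [IsProbabilityMeasure μ]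
    (X Z : Ω → ℝ) (hX : Measurable X) (hZ : Measurable Z)
    (μX μZ : ℝ) (σ2 τ2 : ℝ≥0)
    (hXlaw : Measure.map X μ = gaussianReal μX σ2)
    (hZlaw : Measure.map Z μ = gaussianReal μZ τ2)
    (hindep : IndepFun X Z μ) :
    μ[X | MeasurableSpace.comap (fun ω => X ω + Z ω) inferInstance]
      =ᵐ[μ] fun ω =>
        μX + (X ω + Z ω - μX - μZ) * ((σ2 : ℝ) / ((σ2 : ℝ) + (τ2 : ℝ))) := by
  have hXlaw' : HasLaw X (gaussianReal μX σ2) μ := ⟨hX.aemeasurable, hXlaw⟩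
  have hZlaw' : HasLaw Z (gaussianReal μZ τ2) μ := ⟨hZ.aemeasurable, hZlaw⟩
  have hXg := hXlaw'.hasGaussianLaw
  have hZg := hZlaw'.hasGaussianLaw
  have hvarX : Var[X; μ] = σ2 := by rw [hXlaw'.variance_eq, variance_id_gaussianReal]
  have hvarZ : Var[Z; μ] = τ2 := by rw [hZlaw'.variance_eq, variance_id_gaussianReal]
  have hmeanX : μ[X] = μX := by rw [hXlaw'.integral_eq, integral_id_gaussianReal]
  have hmeanZ : μ[Z] = μZ := by rw [hZlaw'.integral_eq, integral_id_gaussianReal]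
  have hvar : Var[fun ω ↦ X ω + Z ω; μ] = σ2 + τ2 := by
    rw [← Pi.add_def, hindep.variance_add hXg.memLp_two hZg.memLp_two, hvarX, hvarZ]
  filter_upwards [(hindep.hasGaussianLaw_prodMk_add hXg hZg).condExp_comap_snd_ae_eq hX
    (hX.add hZ)] with ω hω
  rw [hω, hindep.covariance_fun_add_right_eq_variance hXg.memLp_two hZg.memLp_two, hvarX, hvar,
    integral_add hXg.integrable hZg.integrable, hmeanX, hmeanZ]
  ring

/-- Regressional Goodhart, case (a): if `X` and `Z` are independent Gaussian random
variables with means `μX, μZ` and variances `σ², τ² > 0`, then almost surely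
`E[X | X + Z] = μX + (X + Z − μX − μZ) · σ²/(σ² + τ²)`. -/
theorem condexp_add_indep_gaussian
    {Ω : Type*} {mΩ : MeasurableSpace Ω} {μ : Measure Ω} [IsProbabilityMeasure μ]
    (X Z : Ω → ℝ) (hX : Measurable X) (hZ : Measurable Z)
    (μX μZ : ℝ) (σ2 τ2 : ℝ≥0) (hσ2 : 0 < σ2) (hτ2 : 0 < τ2)
    (hXlaw : Measure.map X μ = gaussianReal μX σ2)
    (hZlaw : Measure.map Z μ = gaussianReal μZ τ2)
    (hindep : IndepFun X Z μ) :
    μ[X | MeasurableSpace.comap (fun ω => X ω + Z ω) inferInstance]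
      =ᵐ[μ] fun ω =>
        μX + (X ω + Z ω - μX - μZ) * ((σ2 : ℝ) / ((σ2 : ℝ) + (τ2 : ℝ))) :=
  condexp_add_indep_gaussian_general (mΩ := mΩ) X Z hX hZ μX μZ σ2 τ2 hXlaw hZlaw hindep
end

section
/- Let P be a probability measure on ℝ that is absolutely continuous with respect to Lebesgue measure, and let n ≥ 1 be a natural number. Let Q_n be the law of the maximum of n i.i.d. samples from P, i.e., the pushforward of the product measure P^n on ℝⁿ under the map x ↦ max_{1 ≤ i ≤ n} x_i. Then the Kullback–Leibler divergence of Q_n from P equals log n − (n − 1)/n. -/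
/-!
A probability measure `P` without atoms has a continuous distribution function `F`, and `F`
pushes `P` forward to the uniform distribution on `[0, 1]`. The maximum of `n` independent
samples has distribution function `F ^ n`, hence density `n F ^ (n - 1)` with respect to `P`, so
`KL(Q_n ‖ P) = ∫ n F ^ (n - 1) log (n F ^ (n - 1)) dP = ∫₀¹ n u ^ (n - 1) log (n u ^ (n - 1)) du`,
which no longer depends on `P` and evaluates to `log n - (n - 1) / n`.
-/

open MeasureTheory ProbabilityTheory
open scoped ENNReal Classical

/-- The Kullback–Leibler divergence `KL(Q ‖ P) = ∫ log (dQ/dP) dQ` of two measures,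
valued in `[0, ∞]`; it is infinite unless `Q ≪ P` and the log-likelihood ratio is
integrable. -/

noncomputable def klDiv {α : Type*} [MeasurableSpace α] (Q P : Measure α) : ℝ≥0∞ :=
  if Q ≪ P ∧ Integrable (llr Q P) Q then ENNReal.ofReal (∫ x, llr Q P x ∂Q) else ∞

open Set Real

lemma klDiv_withDensity_ofReal {α : Type*} [MeasurableSpace α] (μ : Measure α) [SigmaFinite μ]
    {g : α → ℝ} (hg : Measurable g) (hg0 : 0 ≤ g)
    (hint : Integrable (fun x => g x * log (g x)) μ) :
    klDiv (μ.withDensity fun x => ENNReal.ofReal (g x)) μ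
      = ENNReal.ofReal (∫ x, g x * log (g x) ∂μ) := by
  set ν := μ.withDensity fun x => ENNReal.ofReal (g x)
  have hνμ : ν ≪ μ := withDensity_absolutelyContinuous _ _
  have hrn : (fun x => (ν.rnDeriv μ x).toReal * log (ν.rnDeriv μ x).toReal)
      =ᵐ[μ] fun x => g x * log (g x) := by
    filter_upwards [Measure.rnDeriv_withDensity μ hg.ennreal_ofReal] with x hx
    rw [hx, ENNReal.toReal_ofReal (hg0 x)]
  rw [klDiv, if_pos ⟨hνμ, (integrable_rnDeriv_mul_log_iff hνμ).1 (hint.congr hrn.symm)⟩,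
    ← integral_rnDeriv_mul_log hνμ, integral_congr_ae hrn]

lemma Iic_inter_Icc_zero_one {c : ℝ} (hc : c ≤ 1) : Iic c ∩ Icc 0 1 = Icc 0 c := by
  ext x
  simp only [mem_inter_iff, mem_Iic, mem_Icc]
  constructor
  · rintro ⟨hxc, hx0, -⟩
    exact ⟨hx0, hxc⟩
  · rintro ⟨hx0, hxc⟩
    exact ⟨hxc, hx0, hxc.trans hc⟩

section cdf

variable (P : Measure ℝ) [IsProbabilityMeasure P] [NullSingletonClass P]

lemma continuous_cdf : Continuous (cdf P) := by
  refine continuous_iff_continuousAt.2 fun a => ?_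
  rw [(monotone_cdf P).continuousAt_iff_leftLim_eq_rightLim, (cdf P).rightLim_eq]
  have h := (cdf P).measure_singleton a
  rw [measure_cdf, measure_singleton, eq_comm, ENNReal.ofReal_eq_zero, sub_nonpos] at h
  exact le_antisymm ((monotone_cdf P).leftLim_le le_rfl) h

lemma measure_cdf_preimage_Iic {t : ℝ} (ht0 : 0 ≤ t) (ht1 : t < 1) :
    P (cdf P ⁻¹' Iic t) = ENNReal.ofReal t := by
  set S := cdf P ⁻¹' Iic t
  rcases S.eq_empty_or_nonempty with hS | hS
  · have ht : t = 0 := by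
      by_contra ht
      obtain ⟨x, hx⟩ :=
        ((tendsto_order.1 (tendsto_cdf_atBot P)).2 t (ht0.lt_of_ne' ht)).exists
      exact hS.subset (show x ∈ S from hx.le)
    simp [hS, ht]
  obtain ⟨b, hb⟩ := ((tendsto_order.1 (tendsto_cdf_atTop P)).1 t ht1).exists
  have hbdd : BddAbove S := ⟨b, fun x hx => ((monotone_cdf P).reflect_lt (hx.trans_lt hb)).le⟩
  set a := sSup S
  have hFa_le : cdf P a ≤ t := ((isClosed_Iic.preimage (continuous_cdf P)).csSup_mem hS hbdd :)
  have hS_eq : S = Iic a := by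
    ext x
    exact ⟨fun hx => le_csSup hbdd hx, fun hx => (monotone_cdf P hx).trans hFa_le⟩
  have hFa_ge : t ≤ cdf P a := by
    refine ge_of_tendsto ((continuous_cdf P).continuousAt.continuousWithinAt (s := Ioi a)) ?_
    filter_upwards [self_mem_nhdsWithin] with x (hx : a < x)
    by_contra! hxt
    exact (le_csSup hbdd (show x ∈ S from hxt.le)).not_gt hx
  rw [hS_eq, ← ofReal_cdf, le_antisymm hFa_le hFa_ge]

lemma map_cdf_eq_restrict_Icc : P.map (cdf P) = volume.restrict (Icc 0 1) := by
  refine Measure.ext_of_Iic _ _ fun t => ?_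
  rw [Measure.map_apply (continuous_cdf P).measurable measurableSet_Iic,
    Measure.restrict_apply measurableSet_Iic]
  rcases lt_or_ge t 0 with ht0 | ht0
  · have h1 : cdf P ⁻¹' Iic t = ∅ :=
      eq_empty_of_forall_notMem fun x hx => (cdf_nonneg P x).not_gt (lt_of_le_of_lt hx ht0)
    have h2 : Iic t ∩ Icc (0 : ℝ) 1 = ∅ :=
      eq_empty_of_forall_notMem fun x hx => (hx.2.1.trans hx.1).not_gt ht0
    rw [h1, h2, measure_empty, measure_empty]
  rcases lt_or_ge t 1 with ht1 | ht1
  · rw [measure_cdf_preimage_Iic P ht0 ht1, Iic_inter_Icc_zero_one ht1.le, volume_Icc, sub_zero]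
  · have h1 : cdf P ⁻¹' Iic t = univ :=
      eq_univ_of_forall fun x => (cdf_le_one P x).trans ht1
    rw [h1, measure_univ, inter_eq_right.2 (Icc_subset_Iic_self.trans (Iic_subset_Iic.2 ht1)),
      volume_Icc, sub_zero, ENNReal.ofReal_one]

lemma Iic_ae_eq_cdf_preimage (t : ℝ) : Iic t =ᵐ[P] cdf P ⁻¹' Iic (cdf P t) := by
  refine ae_eq_of_subset_of_measure_ge (fun x hx => monotone_cdf P hx) (le_of_eq ?_)
    measurableSet_Iic.nullMeasurableSet (measure_ne_top _ _)
  rw [← Measure.map_apply (continuous_cdf P).measurable measurableSet_Iic,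
    map_cdf_eq_restrict_Icc, Measure.restrict_apply measurableSet_Iic,
    Iic_inter_Icc_zero_one (cdf_le_one P t), volume_Icc, sub_zero, ofReal_cdf]

lemma setLIntegral_Iic_comp_cdf {h : ℝ → ℝ≥0∞} (hh : Measurable h) (t : ℝ) :
    ∫⁻ x in Iic t, h (cdf P x) ∂P = ∫⁻ u in Icc 0 (cdf P t), h u := by
  rw [setLIntegral_congr (Iic_ae_eq_cdf_preimage P t),
    ← setLIntegral_map measurableSet_Iic hh (continuous_cdf P).measurable,
    map_cdf_eq_restrict_Icc, Measure.restrict_restrict measurableSet_Iic,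
    Iic_inter_Icc_zero_one (cdf_le_one P t)]

lemma integrable_comp_cdf {h : ℝ → ℝ} (hh : Continuous h) :
    Integrable (fun x => h (cdf P x)) P := by
  refine (integrable_map_measure hh.aestronglyMeasurable
    (continuous_cdf P).measurable.aemeasurable).1 ?_
  rw [map_cdf_eq_restrict_Icc]
  exact hh.continuousOn.integrableOn_compact isCompact_Icc

lemma integral_comp_cdf {h : ℝ → ℝ} (hh : Continuous h) :
    ∫ x, h (cdf P x) ∂P = ∫ u in Icc 0 1, h u := by
  rw [← integral_map (continuous_cdf P).measurable.aemeasurable hh.aestronglyMeasurable,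
    map_cdf_eq_restrict_Icc]

end cdf

noncomputable def bestOfN (P : Measure ℝ) (n : ℕ) : Measure ℝ :=
  (Measure.pi fun _ : Fin n => P).map fun x => ⨆ i, x i

lemma bestOfN_Iic (P : Measure ℝ) [SigmaFinite P] (n : ℕ) [NeZero n] (t : ℝ) :
    bestOfN P n (Iic t) = P (Iic t) ^ n := by
  have hpre : (fun x : Fin n → ℝ => ⨆ i, x i) ⁻¹' Iic t = univ.pi fun _ => Iic t := by
    ext x
    simp only [mem_preimage, mem_Iic, mem_univ_pi]
    exact ciSup_le_iff (finite_range x).bddAbove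
  rw [bestOfN, Measure.map_apply (by fun_prop) measurableSet_Iic, hpre, Measure.pi_pi,
    Finset.prod_const, Finset.card_univ, Fintype.card_fin]

lemma lintegral_Icc_pow (k : ℕ) {c : ℝ} (hc : 0 ≤ c) :
    ∫⁻ u in Icc 0 c, ENNReal.ofReal ((k + 1) * u ^ k) = ENNReal.ofReal (c ^ (k + 1)) := by
  rw [← ofReal_integral_eq_lintegral_ofReal (by fun_prop : Continuous _).integrableOn_Icc
    ((ae_restrict_mem measurableSet_Icc).mono fun u hu => by have := hu.1; positivity),
    integral_Icc_eq_integral_Ioc, ← intervalIntegral.integral_of_le hc,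
    intervalIntegral.integral_const_mul, integral_pow]
  congr 1
  field_simp
  simp

lemma bestOfN_succ_eq_withDensity (P : Measure ℝ) [IsProbabilityMeasure P] [NullSingletonClass P]
    (k : ℕ) :
    bestOfN P (k + 1) = P.withDensity fun x => ENNReal.ofReal ((k + 1) * cdf P x ^ k) := by
  have : IsProbabilityMeasure (bestOfN P (k + 1)) :=
    Measure.isProbabilityMeasure_map (by fun_prop)
  refine Measure.ext_of_Iic _ _ fun t => ?_
  rw [bestOfN_Iic, withDensity_apply _ measurableSet_Iic,
    setLIntegral_Iic_comp_cdf P (h := fun u => ENNReal.ofReal ((k + 1) * u ^ k)) (by fun_prop),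
    lintegral_Icc_pow k (cdf_nonneg P t), ← ofReal_cdf, ENNReal.ofReal_pow (cdf_nonneg P t)]

lemma integral_Icc_mul_log_succ_mul_pow (k : ℕ) :
    ∫ u in Icc (0 : ℝ) 1, (k + 1) * u ^ k * log ((k + 1) * u ^ k)
      = log (k + 1) - k / (k + 1) := by
  set G : ℝ → ℝ := fun u => u ^ (k + 1) * (log (k + 1) + k * log u) - k / (k + 1) * u ^ (k + 1)
  have hG : Continuous G := by
    have hG' : G = fun u => u ^ (k + 1) * log (k + 1) + k * u ^ k * (u * log u)
        - k / (k + 1) * u ^ (k + 1) := by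
      ext u
      simp only [G]
      ring
    rw [hG']
    have := continuous_mul_log
    fun_prop
  have hderiv : ∀ u ∈ Ioo (0 : ℝ) 1,
      HasDerivAt G ((k + 1) * u ^ k * log ((k + 1) * u ^ k)) u := by
    rintro u ⟨hu, -⟩
    refine ((((hasDerivAt_pow (k + 1) u).mul (((hasDerivAt_log hu.ne').const_mul
      (k : ℝ)).const_add (log (k + 1)))).sub
      ((hasDerivAt_pow (k + 1) u).const_mul ((k : ℝ) / (k + 1)))).congr_deriv ?_ :)
    rw [log_mul (by positivity) (by positivity), log_pow, Nat.add_sub_cancel]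
    push_cast
    field_simp
    ring
  have hint : IntervalIntegrable (fun u : ℝ => (k + 1) * u ^ k * log ((k + 1) * u ^ k))
      volume 0 1 :=
    (continuous_mul_log.comp (f := fun u : ℝ => (k + 1) * u ^ k) (by fun_prop)).intervalIntegrable
      _ _
  rw [integral_Icc_eq_integral_Ioc, ← intervalIntegral.integral_of_le zero_le_one,
    intervalIntegral.integral_eq_sub_of_hasDerivAt_of_le zero_le_one hG.continuousOn hderiv hint]
  simp [G]

/-- For any probability measure `P` on `ℝ` absolutely continuous with respect to
Lebesgue measure, the KL divergence of the best-of-`n` distribution (the law of the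
maximum of `n` i.i.d. samples from `P`) from `P` equals `log n − (n − 1)/n`. -/
theorem klDiv_bestOfN (P : Measure ℝ) [IsProbabilityMeasure P] (hac : P ≪ volume)
    (n : ℕ) (hn : 1 ≤ n) :
    klDiv (Measure.map (fun x : Fin n → ℝ => ⨆ i, x i) (Measure.pi fun _ => P)) P
      = ENNReal.ofReal (Real.log n - ((n : ℝ) - 1) / n) := by
  have : NullSingletonClass P := ⟨fun x => hac (measure_singleton x)⟩
  obtain ⟨k, rfl⟩ : ∃ k, n = k + 1 := ⟨n - 1, by omega⟩
  have hdensity : Continuous fun u : ℝ => (k + 1) * u ^ k := by fun_prop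
  have hmul_log : Continuous fun u : ℝ => (k + 1) * u ^ k * log ((k + 1) * u ^ k) :=
    continuous_mul_log.comp hdensity
  change klDiv (bestOfN P (k + 1)) P = _
  rw [bestOfN_succ_eq_withDensity,
    klDiv_withDensity_ofReal P (g := fun x => (k + 1) * cdf P x ^ k)
      (hdensity.measurable.comp (continuous_cdf P).measurable)
      (fun x => by have := cdf_nonneg P x; positivity)
      (integrable_comp_cdf P hmul_log),
    integral_comp_cdf P hmul_log, integral_Icc_mul_log_succ_mul_pow]
  push_cast
  rw [add_sub_cancel_right]
end

section
/- For every natural number n ≥ 1, the Lebesgue integral ∫₀¹ n·u^{n−1}·log(n·u^{n−1}) du equals log n − (n − 1)/n. -/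
/-! Since `log (n u^(n-1)) = log n + (n-1) log u`, the integral splits into `log n · ∫₀¹ n u^(n-1)`
and `n (n-1) ∫₀¹ u^(n-1) log u`; the latter is `-(n-1)/n` by the primitive
`u^n log u / n - u^n / n²`, which extends continuously to `u = 0`. -/

open MeasureTheory Real Set

lemma mul_pow_mul_log_mul_pow (c u : ℝ) (k : ℕ) :
    c * u ^ k * log (c * u ^ k) = c * log c * u ^ k + c * k * (u ^ k * log u) := by
  rcases eq_or_ne c 0 with rfl | hc
  · simp
  rcases eq_or_ne u 0 with rfl | hu
  · cases k <;> simp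
  rw [log_mul hc (pow_ne_zero k hu), log_pow]
  ring

lemma continuous_pow_succ_mul_log (k : ℕ) : Continuous fun x : ℝ => x ^ (k + 1) * log x := by
  simpa only [pow_succ, mul_assoc] using (continuous_pow k).fun_mul continuous_mul_log

lemma intervalIntegrable_pow_mul_log (k : ℕ) (a b : ℝ) :
    IntervalIntegrable (fun x => x ^ k * log x) volume a b :=
  intervalIntegral.intervalIntegrable_log'.continuousOn_mul (continuous_pow k).continuousOn

lemma hasDerivAt_pow_succ_mul_log_sub {k : ℕ} {x : ℝ} (hx : x ≠ 0) :
    HasDerivAt (fun x => x ^ (k + 1) * log x / (k + 1) - x ^ (k + 1) / (k + 1) ^ 2)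
      (x ^ k * log x) x := by
  have hpow := hasDerivAt_pow (k + 1) x
  refine (((hpow.fun_mul (hasDerivAt_log hx)).div_const (k + 1)).fun_sub
    (hpow.div_const ((k + 1) ^ 2))).congr_deriv ?_
  simp only [Nat.add_sub_cancel]
  push_cast
  field_simp
  ring

theorem integral_pow_mul_log (k : ℕ) (a b : ℝ) :
    ∫ x in a..b, x ^ k * log x =
      (b ^ (k + 1) * log b - a ^ (k + 1) * log a) / (k + 1)
        - (b ^ (k + 1) - a ^ (k + 1)) / (k + 1) ^ 2 := by
  rw [integral_eq_of_hasDerivAt_off_countable _ _ (countable_singleton 0)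
    (((continuous_pow_succ_mul_log k).div_const _).fun_sub
      ((continuous_pow _).div_const _)).continuousOn
    (fun x hx => hasDerivAt_pow_succ_mul_log_sub hx.2) (intervalIntegrable_pow_mul_log k a b)]
  ring

theorem integral_zero_one_pow_mul_log (k : ℕ) :
    ∫ x in (0:ℝ)..1, x ^ k * log x = -1 / (k + 1) ^ 2 := by
  simp [integral_pow_mul_log, neg_div]

theorem integral_bestOfN_density_mul_log_general (n : ℕ) :
    ∫ u in (0:ℝ)..1, (n * u ^ (n - 1)) * Real.log (n * u ^ (n - 1))
      = Real.log n - ((n : ℝ) - 1) / n := by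
  obtain rfl | hn := eq_or_ne n 0
  · simp -- both sides vanish: `log 0 = 0` and `(0 - 1) / 0 = 0`
  obtain ⟨k, rfl⟩ := Nat.exists_eq_add_one_of_ne_zero hn
  simp only [Nat.add_sub_cancel, mul_pow_mul_log_mul_pow]
  rw [intervalIntegral.integral_add, intervalIntegral.integral_const_mul,
    intervalIntegral.integral_const_mul, integral_pow,
    integral_zero_one_pow_mul_log]
  · push_cast
    field_simp
    ring
  · exact (continuous_pow k).intervalIntegrable 0 1 |>.const_mul _
  · exact (intervalIntegrable_pow_mul_log k 0 1).const_mul _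

/-- For every `n ≥ 1`, `∫₀¹ n·u^(n−1)·log(n·u^(n−1)) du = log n − (n − 1)/n`:
the KL divergence of the best-of-`n` distribution from the uniform distribution
on `[0,1]`. -/
theorem integral_bestOfN_density_mul_log (n : ℕ) (hn : 1 ≤ n) :
    ∫ u in (0:ℝ)..1, (n * u ^ (n - 1)) * Real.log (n * u ^ (n - 1))
      = Real.log n - ((n : ℝ) - 1) / n :=
  integral_bestOfN_density_mul_log_general n
end

section
/- Let 1 ≤ n ≤ N be natural numbers, let X₁, …, X_N be i.i.d. real-valued random variables with an atomless (continuous) distribution P, and let X_(1) ≤ X_(2) ≤ … ≤ X_(N) denote their order statistics. Let f : ℝ → ℝ be a bounded measurable function. Then E[ Σ_{i=n}^{N} (C(i−1, n−1)/C(N, n)) · f(X_(i)) ] = E[ f(max(Y₁, …, Y_n)) ], where Y₁, …, Y_n are i.i.d. with distribution P and C(a, b) denotes the binomial coefficient. -/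
open MeasureTheory ProbabilityTheory Finset

/-!
For a fixed `n`-subset `T` of the indices, `max_{j ∈ T} X_j` is the maximum of `n` i.i.d. draws
from `P`, so averaging `f (max_{j ∈ T} X_j)` over all `C(N, n)` subsets gives an unbiased
estimator. Pointwise this average is the order-statistic estimator: after relabelling the
sample in sorted order, the maximum of `T` is `X_(i)` for the largest rank `i` in `T`, and
exactly `C(i - 1, n - 1)` of the `n`-subsets have largest rank `i`.
-/

section MaxOfSubsets

variable {α : Type*} [LinearOrder α]

theorem Monotone.sup_coe_comp_eq_map_max {β : Type*} [SemilatticeSup β] {h : α → β}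
    (hh : Monotone h) (T : Finset α) :
    (T.sup fun j => (h j : WithBot β)) = T.max.map h := by
  rw [max_eq_sup_coe, apply_sup_eq_sup_comp_of_linearOrder _ (WithBot.monotone_map_iff.2 hh) rfl]
  rfl

theorem Finset.sup_coe_eq_iSup_orderEmbOfFin {β : Type*} [ConditionallyCompleteLinearOrder β]
    {n : ℕ} (g : α → β) (T : Finset α) (hT : #T = n + 1) :
    (T.sup fun j => (g j : WithBot β)) = ↑(⨆ k, g (T.orderEmbOfFin hT k)) := by
  have hne : T.Nonempty := card_pos.mp (by omega)
  have hsup : T.sup' hne g = ⨆ k, g (T.orderEmbOfFin hT k) := by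
    have h := sup'_map (s := univ) (f := (T.orderEmbOfFin hT).toEmbedding) g
      (by rw [map_orderEmbOfFin_univ]; exact hne)
    simp only [map_orderEmbOfFin_univ] at h
    rw [h, sup'_univ_eq_ciSup]
    rfl
  exact (coe_sup' hne g).symm.trans (congrArg _ hsup)

variable [Fintype α] [LocallyFiniteOrderBot α]

theorem Finset.card_filter_powersetCard_max_eq (n : ℕ) (i : α) :
    #{T ∈ powersetCard (n + 1) (univ : Finset α) | T.max = (i : WithBot α)}
      = (#(Iio i)).choose n := by
  rw [← card_powersetCard]
  refine card_nbij' (fun T => T.erase i) (fun U => insert i U) ?_ ?_ ?_ ?_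
  · intro T hT
    simp only [coe_filter, mem_powersetCard, Set.mem_ofPred_eq, subset_univ, true_and] at hT
    obtain ⟨hcard, hmax⟩ := hT
    have hiT : i ∈ T := mem_of_max hmax
    refine mem_powersetCard.2 ⟨fun j hj => ?_, by rw [card_erase_of_mem hiT, hcard]; rfl⟩
    obtain ⟨hji, hjT⟩ := mem_erase.1 hj
    have : (j : WithBot α) ≤ i := hmax ▸ le_max hjT
    exact mem_Iio.2 (lt_of_le_of_ne (WithBot.coe_le_coe.1 this) hji)
  · intro U hU
    obtain ⟨hsub, hcard⟩ := mem_powersetCard.1 hU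
    have hiU : i ∉ U := fun h => lt_irrefl i (mem_Iio.1 (hsub h))
    simp only [coe_filter, mem_powersetCard, Set.mem_ofPred_eq, subset_univ, true_and]
    refine ⟨by rw [card_insert_of_notMem hiU, hcard], ?_⟩
    rw [max_insert, max_eq_left]
    exact Finset.max_le fun j hj => WithBot.coe_le_coe.2 (mem_Iio.1 (hsub hj)).le
  · intro T hT
    exact insert_erase (mem_of_max (mem_filter.1 hT).2)
  · intro U hU
    exact erase_insert fun h => lt_irrefl i (mem_Iio.1 ((mem_powersetCard.1 hU).1 h))

theorem Finset.sum_powersetCard_max {M : Type*} [AddCommMonoid M] (n : ℕ)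
    (φ : WithBot α → M) :
    ∑ T ∈ powersetCard (n + 1) (univ : Finset α), φ T.max
      = ∑ i : α, (#(Iio i)).choose n • φ i := by
  have hmaps : ∀ T ∈ powersetCard (n + 1) (univ : Finset α),
      T.max ∈ univ.map Function.Embedding.coeWithBot := by
    intro T hT
    obtain ⟨a, ha⟩ := max_of_nonempty (card_pos.1 (by rw [(mem_powersetCard.1 hT).2]; omega))
    exact ha ▸ mem_map_of_mem _ (mem_univ a)
  rw [← sum_fiberwise_of_maps_to hmaps, sum_map]
  refine sum_congr rfl fun i _ => ?_
  rw [sum_congr rfl fun T hT => congrArg φ (mem_filter.1 hT).2, sum_const,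
    Function.Embedding.coeWithBot_apply, card_filter_powersetCard_max_eq]

end MaxOfSubsets

theorem Finset.sum_powersetCard_sup_eq_sum_sort {β M : Type*} [LinearOrder β] [AddCommMonoid M]
    {N : ℕ} (n : ℕ) (g : Fin N → β) (φ : WithBot β → M) :
    ∑ T ∈ powersetCard (n + 1) univ, φ (T.sup fun j => (g j : WithBot β))
      = ∑ i : Fin N, (i : ℕ).choose n • φ (g (Tuple.sort g i)) := by
  set σ := Tuple.sort g
  calc ∑ T ∈ powersetCard (n + 1) univ, φ (T.sup fun j => (g j : WithBot β))
      = ∑ T ∈ powersetCard (n + 1) univ,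
          φ ((T.map σ.toEmbedding).sup fun j => (g j : WithBot β)) := by
        conv_lhs => rw [← map_univ_equiv σ, powersetCard_map, sum_map]
        rfl
    _ = ∑ T ∈ powersetCard (n + 1) univ, φ (T.max.map (g ∘ σ)) := by
        refine sum_congr rfl fun T _ => ?_
        rw [sup_map]
        exact congrArg φ ((Tuple.monotone_sort g).sup_coe_comp_eq_map_max T)
    _ = _ := by
        refine (sum_powersetCard_max n (φ ∘ WithBot.map (g ∘ σ))).trans ?_
        simp only [Fin.card_Iio, Function.comp_apply, WithBot.map_coe]

theorem Finset.sum_attach_Icc_succ_eq_sum_fin {M : Type*} [AddCommMonoid M] {m N : ℕ}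
    (a : Fin N → M) (ha : ∀ j : Fin N, (j : ℕ) < m → a j = 0) :
    ∑ i ∈ (Icc (m + 1) N).attach, a ⟨i.1 - 1, by have h := mem_Icc.mp i.2; omega⟩
      = ∑ j, a j := by
  rw [← sum_filter_of_ne (s := univ) (p := fun j : Fin N => m ≤ j)
    fun j _ hj => not_lt.1 (mt (ha j) hj)]
  refine sum_bij' (fun i _ => ⟨i.1 - 1, by have h := mem_Icc.mp i.2; omega⟩)
    (fun j hj => ⟨j + 1, mem_Icc.2 ⟨by simpa using (mem_filter.1 hj).2, j.2⟩⟩)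
    ?_ ?_ ?_ ?_ ?_
  · intro i _
    simp only [mem_filter, mem_univ, true_and]
    have h := mem_Icc.mp i.2; omega
  · intro j _; exact mem_attach _ _
  · intro i _; have h := mem_Icc.mp i.2; ext; simp only; omega
  · intro j _; ext; simp
  · intro i _; rfl

/-- `max_{j ∈ T} x j`, with the junk value `0` at `T = ∅`. -/
noncomputable def subsetMax {ι : Type*} (T : Finset ι) (x : ι → ℝ) : ℝ :=
  (T.sup fun j => (x j : WithBot ℝ)).unbotD 0

theorem subsetMax_eq_iSup_orderEmbOfFin {ι : Type*} [LinearOrder ι] {n : ℕ} (T : Finset ι)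
    (hT : #T = n + 1) (x : ι → ℝ) : subsetMax T x = ⨆ k, x (T.orderEmbOfFin hT k) := by
  rw [subsetMax, sup_coe_eq_iSup_orderEmbOfFin _ T hT, WithBot.unbotD_coe]

theorem measurable_subsetMax {ι : Type*} [LinearOrder ι] (T : Finset ι) :
    Measurable (subsetMax T) := by
  rcases hT : #T with _ | n
  · obtain rfl := card_eq_zero.1 hT
    exact measurable_const
  · rw [funext (subsetMax_eq_iSup_orderEmbOfFin T hT)]
    exact Measurable.iSup fun k => measurable_pi_apply _

theorem sum_attach_Icc_choose_mul_sort_eq_sum_subsetMax {m N : ℕ} (x : Fin N → ℝ)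
    (f : ℝ → ℝ) :
    ∑ i ∈ (Icc (m + 1) N).attach, ((i.1 - 1).choose m : ℝ) *
        f (x (Tuple.sort x ⟨i.1 - 1, by have h := mem_Icc.mp i.2; omega⟩))
      = ∑ T ∈ powersetCard (m + 1) univ, f (subsetMax T x) := by
  calc _ = ∑ j : Fin N, ((j : ℕ).choose m : ℝ) * f (x (Tuple.sort x j)) :=
        sum_attach_Icc_succ_eq_sum_fin _ fun j hj => by simp [Nat.choose_eq_zero_of_lt hj]
    _ = _ := by
        simpa [subsetMax, nsmul_eq_mul] using
          (sum_powersetCard_sup_eq_sum_sort m x fun b => f (b.unbotD 0)).symm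

section Sampling

variable {Ω : Type*} {mΩ : MeasurableSpace Ω} {μ : Measure Ω}

theorem ProbabilityTheory.iIndepFun.map_comp_injective_eq_pi {ι κ β : Type*} [Fintype κ]
    [MeasurableSpace β] {X : ι → Ω → β} {P : Measure β} (hX : ∀ i, Measurable (X i))
    (hindep : iIndepFun X μ) (hlaw : ∀ i, μ.map (X i) = P) {e : κ → ι} (he : e.Injective) :
    μ.map (fun ω k => X (e k) ω) = Measure.pi fun _ => P := by
  rw [(hindep.precomp he).map_fun_eq_pi_map fun k => (hX (e k)).aemeasurable]
  simp only [hlaw]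

theorem integral_comp_iSup_comp_injective {N n : ℕ} {X : Fin N → Ω → ℝ} {P : Measure ℝ}
    (hX : ∀ i, Measurable (X i)) (hindep : iIndepFun X μ) (hlaw : ∀ i, μ.map (X i) = P)
    {f : ℝ → ℝ} (hf : Measurable f) {e : Fin n → Fin N} (he : e.Injective) :
    ∫ ω, f (⨆ k, X (e k) ω) ∂μ
      = ∫ y : Fin n → ℝ, f (⨆ k, y k) ∂(Measure.pi fun _ => P) := by
  rw [← hindep.map_comp_injective_eq_pi hX hlaw he, integral_map (by fun_prop) ?_]
  exact (hf.comp (Measurable.iSup measurable_pi_apply)).aestronglyMeasurable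

end Sampling

/-- Unbiasedness of the best-of-`n` estimator from order statistics: if
`X₁, …, X_N` are i.i.d. with atomless distribution `P`, with order statistics
`X_(1) ≤ … ≤ X_(N)`, and `f` is bounded and measurable, then
`E[ Σ_{i=n}^{N} (C(i−1, n−1)/C(N, n)) · f(X_(i)) ] = E[ f(max(Y₁, …, Y_n)) ]`
where `Y₁, …, Y_n` are i.i.d. with distribution `P`. -/
theorem bestOfN_order_statistic_estimator_unbiased
    {Ω : Type*} {mΩ : MeasurableSpace Ω} {μ : Measure Ω} [IsProbabilityMeasure μ]
    (N n : ℕ) (hn : 1 ≤ n) (hnN : n ≤ N)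
    (X : Fin N → Ω → ℝ) (hX : ∀ i, Measurable (X i))
    (P : Measure ℝ)
    (hiid : iIndepFun X μ)
    (hlaw : ∀ i, Measure.map (X i) μ = P)
    (f : ℝ → ℝ) (hf : Measurable f) (hbdd : ∃ C, ∀ x, |f x| ≤ C)
    -- `Xord ω i` is the `(i+1)`-st order statistic `X_(i+1)` of `X₁ ω, …, X_N ω`.
    (Xord : Ω → Fin N → ℝ)
    (hXord : ∀ ω i, Xord ω i = X (Tuple.sort (fun j => X j ω) i) ω) :
    (∫ ω, ∑ i ∈ (Finset.Icc n N).attach,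
        ((Nat.choose (i.1 - 1) (n - 1) : ℝ) / (Nat.choose N n : ℝ)) *
          f (Xord ω ⟨i.1 - 1, by
            have h := Finset.mem_Icc.mp i.2; omega⟩) ∂μ)
      = ∫ y : Fin n → ℝ, f (⨆ i, y i) ∂(Measure.pi fun _ => P) := by
  obtain ⟨m, rfl⟩ := Nat.exists_eq_add_of_le' hn
  obtain ⟨C, hC⟩ := hbdd
  have hpt : ∀ ω, ∑ i ∈ (Icc (m + 1) N).attach,
        ((Nat.choose (i.1 - 1) (m + 1 - 1) : ℝ) / (Nat.choose N (m + 1) : ℝ)) *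
          f (Xord ω ⟨i.1 - 1, by have h := Finset.mem_Icc.mp i.2; omega⟩)
      = (∑ T ∈ powersetCard (m + 1) univ, f (subsetMax T (X · ω))) / N.choose (m + 1) := by
    intro ω
    simp only [hXord, div_mul_eq_mul_div, ← sum_div, Nat.add_sub_cancel]
    congr 1
    exact sum_attach_Icc_choose_mul_sort_eq_sum_subsetMax (X · ω) f
  have hint : ∀ T ∈ powersetCard (m + 1) univ,
      Integrable (fun ω => f (subsetMax T (X · ω))) μ :=
    fun T _ => .of_bound
      (hf.comp ((measurable_subsetMax T).comp (measurable_pi_lambda _ hX))).aestronglyMeasurable C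
      (ae_of_all _ fun ω => hC _)
  have hE : ∀ T ∈ powersetCard (m + 1) univ, ∫ ω, f (subsetMax T (X · ω)) ∂μ
      = ∫ y : Fin (m + 1) → ℝ, f (⨆ k, y k) ∂(Measure.pi fun _ => P) := by
    intro T hT
    have hcard := (mem_powersetCard.1 hT).2
    simp only [subsetMax_eq_iSup_orderEmbOfFin T hcard]
    exact integral_comp_iSup_comp_injective hX hiid hlaw hf (T.orderEmbOfFin hcard).injective
  have hchoose : (N.choose (m + 1) : ℝ) ≠ 0 := by exact_mod_cast (Nat.choose_pos hnN).ne'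
  rw [integral_congr_ae (ae_of_all _ hpt), integral_div, integral_finsetSum _ hint,
    sum_congr rfl hE, sum_const, card_powersetCard, card_univ, Fintype.card_fin, nsmul_eq_mul,
    mul_div_cancel_left₀ _ hchoose]
end
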